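/- Modus ponens is a partition tautology: let U be a type and σ, π : Setoid U. Then partImp (σ ⊔ partImp σ π) π = ⊥ as setoids. (Partition reading: (σ ∧ (σ ⇒ π)) ⇒ π = 1 for all partitions σ, π on U; equivalently, the law of non-contradiction ¬^π(σ ∧ ¬^π σ) = 1 holds for π-negation.) -/

import Mathlib

/-- The partition implication `σ ⇒ π`: the setoid generated by the relation
`fun a b => π.Rel a b ∧ ¬ σ.Rel a b`. -/
def partImp {U : Type*} (σ π : Setoid U) : Setoid U :=
  Relation.EqvGen.setoid (fun a b => π.r a b ∧ ¬ σ.r a b)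

section PartImp

variable {U : Type*} {σ π τ : Setoid U}

theorem partImp_rel_of_rel_of_not_rel {a b : U} (hπ : π a b) (hσ : ¬ σ a b) :
    partImp σ π a b :=
  Relation.EqvGen.rel a b ⟨hπ, hσ⟩

theorem partImp_le_iff : partImp σ π ≤ τ ↔ ∀ a b, π a b → ¬ σ a b → τ a b :=
  ⟨fun h _ _ hπ hσ => h (partImp_rel_of_rel_of_not_rel hπ hσ),
    fun h => Setoid.eqvGen_le fun a b hab => h a b hab.1 hab.2⟩

/-- In partition terms: `σ ⇒ π = 1` exactly when `σ ≤ π` in the refinement order. -/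
theorem partImp_eq_bot_iff : partImp σ π = ⊥ ↔ π ≤ σ := by
  rw [← le_bot_iff, partImp_le_iff]
  constructor
  · intro h a b hπ
    by_contra hσ
    exact hσ (h a b hπ hσ ▸ σ.refl' a)
  · exact fun h a b hπ hσ => absurd (h hπ) hσ

theorem le_sup_partImp (σ π : Setoid U) : π ≤ σ ⊔ partImp σ π := by
  intro a b hπ
  by_cases hσ : σ a b
  · exact le_sup_left (a := σ) hσ
  · exact le_sup_right (a := σ) (partImp_rel_of_rel_of_not_rel hπ hσ)

end PartImp

/-- **Modus ponens is a partition tautology**: `(σ ∧ (σ ⇒ π)) ⇒ π = 1` for all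
partitions `σ`, `π`; in setoid terms the formula evaluates to `⊥` (the discrete
partition). Equivalently, the law of non-contradiction `¬^π (σ ∧ ¬^π σ) = 1`. -/
theorem modus_ponens_tautology {U : Type*} (σ π : Setoid U) :
    partImp (σ ⊔ partImp σ π) π = ⊥ :=
  partImp_eq_bot_iff.mpr (le_sup_partImp σ π)
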